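/- Let R be a win-based WAM and define the sequence w by w_0 = 1 and w_{j+1} = g(w_j) (so w_j is the weight of a voter who has won j rounds). Then R satisfies simple proportionality if and only if x·w_x < (y+1)·w_y for all integers x, y ≥ 0. -/

import Mathlib

open scoped Classical
open Finset

/-! ## The perpetual voting framework

Voters are `Fin n`; alternatives are natural numbers (the order on `ℕ` plays no
special role: tie-breaking orders are explicit parameters `tb`). -/

/-- An approval profile: each voter approves a finite set of alternatives. -/
abbrev Profile (n : ℕ) := Fin n → Finset ℕ

/-- A decision sequence for `n` voters: in round `i` (0-indexed) the set of
alternatives is `C i` and the approval profile is `A i`; every approval set is a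
nonempty subset of the current alternatives. -/
structure DecisionSeq (n : ℕ) where
  C : ℕ → Finset ℕ
  A : ℕ → Profile n
  approvalSub : ∀ i v, A i v ⊆ C i
  approvalNonempty : ∀ i v, (A i v).Nonempty

/-- A perpetual voting rule: for every number of voters and every decision
sequence it resolutely chooses one winning alternative in each round; the winner
belongs to the current set of alternatives, and it only depends on the rounds up
to (and including) the current one (the past winners are then determined as
well, since the rule is applied round by round). -/
structure PerpetualRule where
  choice : ∀ n : ℕ, DecisionSeq n → ℕ → ℕ
  choice_mem : ∀ (n : ℕ) (D : DecisionSeq n) (k : ℕ), choice n D k ∈ D.C k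
  causal : ∀ (n : ℕ) (D D' : DecisionSeq n) (k : ℕ),
    (∀ i ≤ k, D.A i = D'.A i ∧ D.C i = D'.C i) → choice n D k = choice n D' k

/-- Satisfaction of voter `v` with the first `t` rounds of the choice sequence
produced by rule `R` on `D`. -/
noncomputable def satAt (R : PerpetualRule) {n : ℕ} (D : DecisionSeq n) (v : Fin n) (t : ℕ) : ℕ :=
  ((Finset.range t).filter fun i => R.choice n D i ∈ D.A i v).card

/-- Voter `v` has a dry spell of length `l`: in some window of `l` consecutive
rounds her satisfaction does not increase. -/
def HasDrySpell (R : PerpetualRule) {n : ℕ} (D : DecisionSeq n) (v : Fin n) (l : ℕ) : Prop :=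
  ∃ t : ℕ, satAt R D v t = satAt R D v (t + l)

/-- `R` has a dry spell guarantee of `d`: on no decision sequence does any voter
have a dry spell of length `d n`. -/
def DrySpellGuarantee (R : PerpetualRule) (d : ℕ → ℕ) : Prop :=
  ∀ (n : ℕ) (D : DecisionSeq n) (v : Fin n), ¬ HasDrySpell R D v (d n)

/-- Weighted approval score of alternative `c` for weights `β`. -/
noncomputable def approvalScore {n : ℕ} (β : Fin n → ℝ) (A : Profile n) (c : ℕ) : ℝ :=
  ∑ v : Fin n, if c ∈ A v then β v else 0

/-- `c` is the alternative selected from `Cs` by maximizing the weighted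
approval score w.r.t. weights `β`, ties broken by the fixed order `tb`. -/
def SelectedBy {n : ℕ} (β : Fin n → ℝ) (A : Profile n) (Cs : Finset ℕ)
    (tb : ℕ → ℕ → Prop) (c : ℕ) : Prop :=
  c ∈ Cs ∧ (∀ c' ∈ Cs, approvalScore β A c' ≤ approvalScore β A c) ∧
    (∀ c' ∈ Cs, approvalScore β A c' = approvalScore β A c → tb c c')

/-- `R` is a weighted approval method (WAM) with tie-breaking order `tb`:
there are voter weights, initialized to `1`, depending only on the history of
previous rounds, such that in each round `R` selects a weighted-approval-score
maximizing alternative (ties broken by `tb`). -/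
def IsWAM (R : PerpetualRule) (tb : ℕ → ℕ → Prop) : Prop :=
  ∃ α : ∀ n : ℕ, DecisionSeq n → ℕ → Fin n → ℝ,
    (∀ (n : ℕ) (D : DecisionSeq n) (v : Fin n), α n D 0 v = 1) ∧
    (∀ (n : ℕ) (D D' : DecisionSeq n) (k : ℕ),
        (∀ i < k, D.A i = D'.A i ∧ D.C i = D'.C i) → α n D k = α n D' k) ∧
    ∀ (n : ℕ) (D : DecisionSeq n) (k : ℕ),
      SelectedBy (α n D k) (D.A k) (D.C k) tb (R.choice n D k)

/-- The weights of a basic WAM with update functions `f` (for losing) and `g`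
(for winning), relative to the choices of rule `R`. -/
noncomputable def basicWeight (R : PerpetualRule) (f g : ℝ → ℝ) (n : ℕ) (D : DecisionSeq n) :
    ℕ → Fin n → ℝ
  | 0 => fun _ => 1
  | k + 1 => fun v =>
      if R.choice n D k ∈ D.A k v then g (basicWeight R f g n D k v)
      else f (basicWeight R f g n D k v)

/-- `R` is the basic WAM with update functions `f`, `g` and tie-breaking `tb`. -/
def IsBasicWAMWith (R : PerpetualRule) (f g : ℝ → ℝ) (tb : ℕ → ℕ → Prop) : Prop :=
  ∀ (n : ℕ) (D : DecisionSeq n) (k : ℕ),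
    SelectedBy (basicWeight R f g n D k) (D.A k) (D.C k) tb (R.choice n D k)

/-- A win-based WAM: a basic WAM with `f = id` (and `g x ≤ x`). -/
def IsWinBasedWAM (R : PerpetualRule) (g : ℝ → ℝ) (tb : ℕ → ℕ → Prop) : Prop :=
  (∀ x : ℝ, g x ≤ x) ∧ IsBasicWAMWith R id g tb

/-- A loss-based WAM: a basic WAM with `g = id` (and `f x ≥ x`). -/
def IsLossBasedWAM (R : PerpetualRule) (f : ℝ → ℝ) (tb : ℕ → ℕ → Prop) : Prop :=
  (∀ x : ℝ, x ≤ f x) ∧ IsBasicWAMWith R f id tb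

/-- Approval voting: the basic WAM with `f = g = id`. -/
def IsAV (R : PerpetualRule) (tb : ℕ → ℕ → Prop) : Prop :=
  IsBasicWAMWith R id id tb

/-- Perpetual Reset: the basic WAM with `f x = x + 1` and `g x = 1`. -/
def IsPerpetualReset (R : PerpetualRule) (tb : ℕ → ℕ → Prop) : Prop :=
  IsBasicWAMWith R (fun x => x + 1) (fun _ => 1) tb

/-- Perpetual PAV: the win-based WAM with `g x = x / (x + 1)`, i.e. the weight of
a voter satisfied `s` times is `1 / (s + 1)`. -/
def IsPerpetualPAV (R : PerpetualRule) (tb : ℕ → ℕ → Prop) : Prop :=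
  IsBasicWAMWith R id (fun x => x / (x + 1)) tb

/-- The voter weights of Perpetual Consensus (relative to the choices of `R`). -/
noncomputable def consensusWeight (R : PerpetualRule) (n : ℕ) (D : DecisionSeq n) :
    ℕ → Fin n → ℝ
  | 0 => fun _ => 1
  | k + 1 => fun v =>
      if R.choice n D k ∈ D.A k v ∧ 0 < consensusWeight R n D k v then
        consensusWeight R n D k v + 1 -
          (n : ℝ) / ((Finset.univ.filter fun u : Fin n =>
              R.choice n D k ∈ D.A k u ∧ 0 < consensusWeight R n D k u).card : ℝ)
      else consensusWeight R n D k v + 1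

/-- `R` is Perpetual Consensus with tie-breaking order `tb`: in each round it
selects an alternative maximizing `∑_{v approving c} max 0 (α v)` for the
Perpetual Consensus weights `α`. -/
def IsPerpetualConsensus (R : PerpetualRule) (tb : ℕ → ℕ → Prop) : Prop :=
  ∀ (n : ℕ) (D : DecisionSeq n) (k : ℕ),
    SelectedBy (fun v => max 0 (consensusWeight R n D k v)) (D.A k) (D.C k) tb
      (R.choice n D k)

/-- Insert the decision instance `(A0, C0)` at position `i` (0-indexed) into `D`,
shifting all later rounds by one. -/
def DecisionSeq.insertAt {n : ℕ} (D : DecisionSeq n) (i : ℕ) (C0 : Finset ℕ)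
    (A0 : Profile n) (hsub : ∀ v, A0 v ⊆ C0) (hne : ∀ v, (A0 v).Nonempty) :
    DecisionSeq n where
  C := fun j => if j < i then D.C j else if j = i then C0 else D.C (j - 1)
  A := fun j v => if j < i then D.A j v else if j = i then A0 v else D.A (j - 1) v
  approvalSub := by
    intro j v
    try dsimp only
    split_ifs with h1 h2
    · exact D.approvalSub j v
    · exact hsub v
    · exact D.approvalSub (j - 1) v
  approvalNonempty := by
    intro j v
    try dsimp only
    split_ifs with h1 h2
    · exact D.approvalNonempty j v
    · exact hne v
    · exact D.approvalNonempty (j - 1) v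

/-- The profile `A0` is uncontroversial due to `c`: the intersection of all
approval sets is exactly `{c}`. -/
def Uncontroversial {n : ℕ} (A0 : Profile n) (c : ℕ) : Prop :=
  (∀ v, c ∈ A0 v) ∧ ∀ c', (∀ v, c' ∈ A0 v) → c' = c

/-- Independence of uncontroversial decisions: inserting an uncontroversial
decision instance at any position yields `c` in the inserted round and leaves
all other choices unchanged. -/
def SatisfiesIUD (R : PerpetualRule) : Prop :=
  ∀ (n : ℕ) (D : DecisionSeq n) (i : ℕ) (C0 : Finset ℕ) (A0 : Profile n)
    (hsub : ∀ v, A0 v ⊆ C0) (hne : ∀ v, (A0 v).Nonempty) (c : ℕ),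
    Uncontroversial A0 c →
      (∀ j < i, R.choice n (D.insertAt i C0 A0 hsub hne) j = R.choice n D j) ∧
      R.choice n (D.insertAt i C0 A0 hsub hne) i = c ∧
      ∀ j, i ≤ j → R.choice n (D.insertAt i C0 A0 hsub hne) (j + 1) = R.choice n D j

/-- A simple decision sequence: the same profile and alternatives in every
round, and every voter approves exactly one alternative. -/
def DecisionSeq.IsSimple {n : ℕ} (D : DecisionSeq n) : Prop :=
  (∀ i, D.A i = D.A 0) ∧ (∀ i, D.C i = D.C 0) ∧ ∀ v, (D.A 0 v).card = 1

/-- `#v`: the number of voters with the same approval set as `v` (in a simple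
decision sequence). -/
noncomputable def groupSize {n : ℕ} (D : DecisionSeq n) (v : Fin n) : ℕ :=
  (Finset.univ.filter fun u : Fin n => D.A 0 u = D.A 0 v).card

/-- Simple proportionality: on every simple decision sequence with `n` voters,
after `n` rounds every voter's satisfaction equals `#v`. -/
def SatisfiesSimpleProportionality (R : PerpetualRule) : Prop :=
  ∀ (n : ℕ) (D : DecisionSeq n), D.IsSimple →
    ∀ v : Fin n, satAt R D v n = groupSize D v

/-- Apportionment lower quota: on simple decision sequences, after `k` rounds
every voter has satisfaction at least `⌊k · #v / n⌋`. -/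
def SatisfiesALQ (R : PerpetualRule) : Prop :=
  ∀ (n : ℕ) (D : DecisionSeq n), D.IsSimple → ∀ (k : ℕ) (v : Fin n),
    ⌊((k : ℚ) * (groupSize D v : ℚ)) / (n : ℚ)⌋ ≤ (satAt R D v k : ℤ)

/-- Apportionment upper quota: on simple decision sequences, after `k` rounds
every voter has satisfaction at most `⌈k · #v / n⌉`. -/
def SatisfiesAUQ (R : PerpetualRule) : Prop :=
  ∀ (n : ℕ) (D : DecisionSeq n), D.IsSimple → ∀ (k : ℕ) (v : Fin n),
    (satAt R D v k : ℤ) ≤ ⌈((k : ℚ) * (groupSize D v : ℚ)) / (n : ℚ)⌉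

/-- The load each member of `N'` would carry if `N'` were selected. -/
noncomputable def newLoad {n : ℕ} (ld : Fin n → ℝ) (N' : Finset (Fin n)) : ℝ :=
  (1 + ∑ v ∈ N', ld v) / (N'.card : ℝ)

/-- `R` is Perpetual Phragmén with tie-breaking order `tb` on alternatives:
there are loads (initially `0`) and, in each round, a selected nonempty voter
set of minimal prospective load among all sets jointly approving some
alternative; the winner is jointly approved by the selected set (ties among its
jointly approved alternatives broken by `tb`) and loads are updated accordingly. -/
def IsPerpetualPhragmen (R : PerpetualRule) (tb : ℕ → ℕ → Prop) : Prop :=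
  ∃ (load : ∀ n : ℕ, DecisionSeq n → ℕ → Fin n → ℝ)
    (S : ∀ n : ℕ, DecisionSeq n → ℕ → Finset (Fin n)),
    (∀ (n : ℕ) (D : DecisionSeq n) (v : Fin n), load n D 0 v = 0) ∧
    ∀ (n : ℕ) (D : DecisionSeq n) (k : ℕ),
      (S n D k).Nonempty ∧
      (∀ v ∈ S n D k, R.choice n D k ∈ D.A k v) ∧
      (∀ N' : Finset (Fin n), N'.Nonempty → (∃ c, ∀ v ∈ N', c ∈ D.A k v) →
        newLoad (load n D k) (S n D k) ≤ newLoad (load n D k) N') ∧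
      (∀ c, (∀ v ∈ S n D k, c ∈ D.A k v) → tb (R.choice n D k) c) ∧
      ∀ v : Fin n, load n D (k + 1) v =
        if v ∈ S n D k then newLoad (load n D k) (S n D k) else load n D k v

/-- Rotating Dictator w.r.t. the enumeration `e` of the voters: in round `k`
an alternative approved by the dictator `e n (k mod n)` is chosen (the
tb-best alternative approved by the dictator). -/
def IsRotatingDictator (R : PerpetualRule) (e : ∀ n : ℕ, Equiv.Perm (Fin n))
    (tb : ℕ → ℕ → Prop) : Prop :=
  ∀ (n : ℕ) (hn : 0 < n) (D : DecisionSeq n) (k : ℕ),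
    R.choice n D k ∈ D.A k (e n ⟨k % n, Nat.mod_lt k hn⟩) ∧
    ∀ c ∈ D.A k (e n ⟨k % n, Nat.mod_lt k hn⟩), tb (R.choice n D k) c

/-- `r(x)` for the Exponential Rule: `(m+1)/2` for the smallest natural number
`m` such that `2 ^ l * x = m` for some `l ≥ 0` (and `0` if no such `m` exists;
those values are never required). -/
noncomputable def expRound (x : ℝ) : ℕ :=
  if h : ∃ m : ℕ, ∃ l : ℕ, (2 : ℝ) ^ l * x = (m : ℝ) then (Nat.find h + 1) / 2 else 0

/-- The `f`-function of the Exponential Rule. -/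
noncomputable def expF (x : ℝ) : ℝ :=
  ((2 * (expRound x : ℝ) + 1) / (2 * (expRound x : ℝ) - 1)) * x

/-- The `g`-function of the Exponential Rule. -/
noncomputable def expG (x : ℝ) : ℝ :=
  ((2 * (expRound x : ℝ) + 1) /
      ((2 : ℝ) ^ (Nat.factorial (expRound x)) * (2 * (expRound x : ℝ) - 1))) * x

/-- The Exponential Rule: the basic WAM with update functions `expF`, `expG`. -/
def IsExponentialRule (R : PerpetualRule) (tb : ℕ → ℕ → Prop) : Prop :=
  IsBasicWAMWith R expF expG tb

/-- Round `j` is dictatorial: some voter `v` approves the winner, while all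
other voters disapprove the winner and jointly approve some other alternative `c`. -/
def DictatorialRound (R : PerpetualRule) {n : ℕ} (D : DecisionSeq n) (j : ℕ) : Prop :=
  ∃ c ∈ D.C j, c ≠ R.choice n D j ∧ ∃ v : Fin n, R.choice n D j ∈ D.A j v ∧
    ∀ v' : Fin n, v' ≠ v → R.choice n D j ∉ D.A j v' ∧ c ∈ D.A j v'

/-- The weights of Frege's apportionment method on the apportionment instance
induced by a simple decision sequence `D` (party of alternative `c` has vote
share `|N(c)|/n`), with seats assigned according to the choices of rule `R`. -/
noncomputable def fregeWeight (R : PerpetualRule) (n : ℕ) (D : DecisionSeq n) :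
    ℕ → ℕ → ℝ
  | 0 => fun c => ((Finset.univ.filter fun v : Fin n => D.A 0 v = {c}).card : ℝ) / (n : ℝ)
  | t + 1 => fun c =>
      fregeWeight R n D t c +
        ((Finset.univ.filter fun v : Fin n => D.A 0 v = {c}).card : ℝ) / (n : ℝ) -
        if R.choice n D t = c then 1 else 0

/-! The weight of a voter who has won `j` rounds is `w_j = g^[j] 1`, and on a simple sequence
every supporter of `c` has won exactly as often as `c`, so `c` scores `#c · w_{W_c}` where `W_c`
counts its wins. If `x w_x < (y+1) w_y` for all `x, y`, an alternative that has reached its quota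
`#c` scores less than one that has not (`#c w_{#c} < (W+1) w_W ≤ #c' w_W`), so no alternative
ever exceeds its quota, and after `n` rounds every quota is met. Conversely, if
`x w_x ≥ (y+1) w_y`, take `x` voters for `a` and `y+1` voters for `b`, with `a` preferred in ties:
when `b` is about to win its `(y+1)`-th round, `a` has won at most `x` rounds and so scores at
least `x w_x ≥ (y+1) w_y`, the score of `b`; thus `b` cannot win that round. -/

open Function

theorem Nat.exists_lt_count_eq_of_lt_count {p : ℕ → Prop} [DecidablePred p] {m n : ℕ}
    (h : m < Nat.count p n) : ∃ t < n, p t ∧ Nat.count p t = m := by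
  induction n with
  | zero => simp at h
  | succ n ih =>
    rw [Nat.count_succ] at h
    by_cases hm : m < Nat.count p n
    · obtain ⟨t, ht, hpt, hct⟩ := ih hm
      exact ⟨t, by omega, hpt, hct⟩
    · by_cases hpn : p n
      · exact ⟨n, by omega, hpn, by simp only [hpn, if_true] at h; omega⟩
      · simp only [hpn, if_false] at h; omega

theorem antitone_iterate_of_map_le_self {α : Type*} [Preorder α] {g : α → α}
    (hg : ∀ x, g x ≤ x) (x : α) : Antitone fun j => g^[j] x :=
  antitone_nat_of_succ_le fun j => by rw [iterate_succ_apply']; exact hg _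

variable {n : ℕ}

noncomputable def winCount (R : PerpetualRule) (D : DecisionSeq n) (c t : ℕ) : ℕ :=
  Nat.count (fun i => R.choice n D i = c) t

noncomputable def DecisionSeq.supportCount (D : DecisionSeq n) (c : ℕ) : ℕ :=
  #{u | D.A 0 u = {c}}

theorem satAt_eq_count (R : PerpetualRule) (D : DecisionSeq n) (v : Fin n) (t : ℕ) :
    satAt R D v t = Nat.count (fun i => R.choice n D i ∈ D.A i v) t :=
  (Nat.count_eq_card_filter_range _ _).symm

theorem basicWeight_id_eq_iterate (R : PerpetualRule) (g : ℝ → ℝ) (D : DecisionSeq n)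
    (k : ℕ) (v : Fin n) : basicWeight R id g n D k v = g^[satAt R D v k] 1 := by
  induction k with
  | zero => simp [basicWeight, satAt]
  | succ k ih =>
    rw [satAt_eq_count, Nat.count_succ, ← satAt_eq_count]
    simp only [basicWeight, ih]
    split_ifs
    · rw [iterate_succ_apply']
    · rfl

theorem groupSize_eq_supportCount {D : DecisionSeq n} {v : Fin n} {c : ℕ}
    (hv : D.A 0 v = {c}) : groupSize D v = D.supportCount c := by
  simp only [groupSize, DecisionSeq.supportCount, hv]

namespace DecisionSeq.IsSimple

variable {D : DecisionSeq n}

theorem exists_eq_singleton (hD : D.IsSimple) (v : Fin n) : ∃ c, D.A 0 v = {c} :=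
  card_eq_one.mp (hD.2.2 v)

theorem mem_iff (hD : D.IsSimple) (i : ℕ) (v : Fin n) (c : ℕ) :
    c ∈ D.A i v ↔ D.A 0 v = {c} := by
  obtain ⟨d, hd⟩ := hD.exists_eq_singleton v
  rw [hD.1 i, hd, mem_singleton, singleton_inj, eq_comm]

theorem satAt_eq_winCount (hD : D.IsSimple) (R : PerpetualRule) {v : Fin n} {c : ℕ}
    (hv : D.A 0 v = {c}) (t : ℕ) : satAt R D v t = winCount R D c t := by
  have hA : ∀ i, D.A i v = {c} := fun i => by rw [hD.1 i, hv]
  simp only [satAt_eq_count, winCount, hA, mem_singleton]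

theorem approvalScore_basicWeight (hD : D.IsSimple) (R : PerpetualRule) (g : ℝ → ℝ)
    (k c : ℕ) :
    approvalScore (basicWeight R id g n D k) (D.A k) c =
      D.supportCount c * g^[winCount R D c k] 1 := by
  have hterm : ∀ v : Fin n, (if c ∈ D.A k v then basicWeight R id g n D k v else 0) =
      if D.A 0 v = {c} then g^[winCount R D c k] 1 else 0 := fun v => by
    by_cases hv : D.A 0 v = {c}
    · rw [if_pos ((hD.mem_iff k v c).2 hv), if_pos hv, basicWeight_id_eq_iterate,
        hD.satAt_eq_winCount R hv]
    · rw [if_neg (mt (hD.mem_iff k v c).1 hv), if_neg hv]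
  rw [approvalScore, Fintype.sum_congr _ _ hterm, ← sum_filter, sum_const, nsmul_eq_mul]
  rfl

theorem sum_winCount (hD : D.IsSimple) (R : PerpetualRule) (t : ℕ) :
    ∑ c ∈ D.C 0, winCount R D c t = t := by
  have h := card_eq_sum_card_fiberwise (s := range t) (t := D.C 0) (f := R.choice n D)
    fun i _ => hD.2.1 i ▸ R.choice_mem n D i
  simpa only [card_range, winCount, Nat.count_eq_card_filter_range, eq_comm] using h.symm

theorem sum_supportCount (hD : D.IsSimple) : ∑ c ∈ D.C 0, D.supportCount c = n := by
  choose cv hcv using hD.exists_eq_singleton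
  have h := card_eq_sum_card_fiberwise (s := univ) (t := D.C 0) (f := cv)
    fun u _ => D.approvalSub 0 u (by rw [hcv u]; exact mem_singleton_self _)
  simpa only [card_univ, Fintype.card_fin, supportCount, hcv, singleton_inj] using h.symm

end DecisionSeq.IsSimple

namespace IsBasicWAMWith

variable {R : PerpetualRule} {g : ℝ → ℝ} {tb : ℕ → ℕ → Prop}

theorem winCount_le_supportCount (hR : IsBasicWAMWith R id g tb)
    (hw : ∀ x y : ℕ, (x : ℝ) * g^[x] 1 < (y + 1) * g^[y] 1) {D : DecisionSeq n}
    (hD : D.IsSimple) {t : ℕ} (ht : t ≤ n) (c : ℕ) :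
    winCount R D c t ≤ D.supportCount c := by
  induction t generalizing c with
  | zero => simp [winCount]
  | succ t ih =>
    rw [winCount, Nat.count_succ, ← winCount]
    split_ifs with hc
    swap
    · simpa only [add_zero] using ih (by omega) c
    subst hc
    refine Nat.succ_le_of_lt (lt_of_le_of_ne (ih (by omega) _) fun hfull => ?_)
    -- the winner is already at its quota, while `t < n` leaves some `c'` below its quota
    obtain ⟨c', hc'C, hc'⟩ : ∃ c' ∈ D.C 0, winCount R D c' t < D.supportCount c' :=
      exists_lt_of_sum_lt (by rw [hD.sum_winCount, hD.sum_supportCount]; omega)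
    have hmax := (hR n D t).2.1 c' (hD.2.1 t ▸ hc'C)
    rw [hD.approvalScore_basicWeight, hD.approvalScore_basicWeight, hfull] at hmax
    set s := D.supportCount (R.choice n D t)
    set w' := winCount R D c' t
    have hpos : 0 < g^[w'] 1 := pos_of_mul_pos_right (by simpa using hw 0 w') (by positivity)
    refine lt_irrefl ((s : ℝ) * g^[s] 1) ?_
    calc (s : ℝ) * g^[s] 1 < (w' + 1) * g^[w'] 1 := hw s w'
      _ ≤ D.supportCount c' * g^[w'] 1 := by gcongr; exact_mod_cast hc'
      _ ≤ s * g^[s] 1 := hmax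

theorem satisfiesSimpleProportionality (hR : IsBasicWAMWith R id g tb)
    (hw : ∀ x y : ℕ, (x : ℝ) * g^[x] 1 < (y + 1) * g^[y] 1) :
    SatisfiesSimpleProportionality R := by
  intro n D hD v
  obtain ⟨c, hv⟩ := hD.exists_eq_singleton v
  have hle : ∀ c ∈ D.C 0, winCount R D c n ≤ D.supportCount c :=
    fun c _ => hR.winCount_le_supportCount hw hD le_rfl c
  have heq := (sum_eq_sum_iff_of_le hle).1 (by rw [hD.sum_winCount, hD.sum_supportCount])
  rw [hD.satAt_eq_winCount R hv, groupSize_eq_supportCount hv]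
  exact heq c (D.approvalSub 0 v (hv ▸ mem_singleton_self c))

end IsBasicWAMWith

def twoGroups (a b x n : ℕ) : DecisionSeq n where
  C _ := {a, b}
  A _ v := if (v : ℕ) < x then {a} else {b}
  approvalSub _ v := by split_ifs <;> simp
  approvalNonempty _ v := by split_ifs <;> simp

section twoGroups

variable {a b x : ℕ}

theorem isSimple_twoGroups : (twoGroups a b x n).IsSimple :=
  ⟨fun _ => rfl, fun _ => rfl, fun v => by simp only [twoGroups]; split_ifs <;> rfl⟩

theorem supportCount_twoGroups_left (hab : a ≠ b) (hx : x ≤ n) :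
    (twoGroups a b x n).supportCount a = x := by
  have hA : ∀ u : Fin n, (twoGroups a b x n).A 0 u = {a} ↔ (u : ℕ) < x := fun u => by
    by_cases hu : (u : ℕ) < x <;> simp [twoGroups, hu, Ne.symm hab]
  simp only [DecisionSeq.supportCount, hA, Fin.card_filter_val_lt, min_eq_right hx]

theorem supportCount_twoGroups_right (hab : a ≠ b) (hx : x ≤ n) :
    (twoGroups a b x n).supportCount b = n - x := by
  have h := (isSimple_twoGroups : (twoGroups a b x n).IsSimple).sum_supportCount
  rw [show (twoGroups a b x n).C 0 = {a, b} from rfl, sum_pair hab,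
    supportCount_twoGroups_left hab hx] at h
  omega

end twoGroups

namespace IsWinBasedWAM

variable {R : PerpetualRule} {g : ℝ → ℝ} {tb : ℕ → ℕ → Prop}

theorem lt_of_satisfiesSimpleProportionality [Std.Antisymm tb] [Std.Total tb]
    (hR : IsWinBasedWAM R g tb) (hprop : SatisfiesSimpleProportionality R) (x y : ℕ) :
    (x : ℝ) * g^[x] 1 < (y + 1) * g^[y] 1 := by
  obtain ⟨a, b, hab, htab⟩ : ∃ a b : ℕ, a ≠ b ∧ tb a b := by
    rcases Std.Total.total (r := tb) 0 1 with h | h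
    exacts [⟨0, 1, by norm_num, h⟩, ⟨1, 0, by norm_num, h⟩]
  set D := twoGroups a b x (x + y + 1)
  have hD : D.IsSimple := isSimple_twoGroups
  have hsa : D.supportCount a = x := supportCount_twoGroups_left hab (by omega)
  have hsb : D.supportCount b = y + 1 := by
    rw [supportCount_twoGroups_right hab (by omega)]; omega
  have hwin : winCount R D b (x + y + 1) = y + 1 := by
    have hv : D.A 0 ⟨x, by omega⟩ = {b} := by simp [D, twoGroups]
    rw [← hD.satAt_eq_winCount R hv, hprop _ D hD, groupSize_eq_supportCount hv, hsb]
  obtain ⟨t, ht, hbt, hwt⟩ : ∃ t < x + y + 1, R.choice _ D t = b ∧ winCount R D b t = y :=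
    Nat.exists_lt_count_eq_of_lt_count (show y < winCount R D b (x + y + 1) by omega)
  have hwa : winCount R D a t ≤ x := by
    have h := hD.sum_winCount R t
    rw [show D.C 0 = {a, b} from rfl, sum_pair hab] at h
    omega
  obtain ⟨-, hmax, htie⟩ := hR.2 (x + y + 1) D t
  have ha : a ∈ D.C t := by simp [D, twoGroups]
  have hle := hmax a ha
  have htba := htie a ha
  simp only [hbt, hD.approvalScore_basicWeight, hsa, hsb, hwt] at hle htba
  by_contra! hge
  refine hab (antisymm htab (htba (le_antisymm hle ?_)))
  push_cast
  exact hge.trans (by gcongr; exact antitone_iterate_of_map_le_self hR.1 1 hwa)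

end IsWinBasedWAM

/-- A win-based WAM with weight sequence `w_j = g^[j] 1`
satisfies simple proportionality iff `x·w_x < (y+1)·w_y` for all `x, y ≥ 0`. -/
theorem winBased_WAM_simple_proportionality_characterization
    (R : PerpetualRule) (g : ℝ → ℝ) (tb : ℕ → ℕ → Prop) (htb : IsLinearOrder ℕ tb)
    (hR : IsWinBasedWAM R g tb) :
    SatisfiesSimpleProportionality R ↔
      ∀ x y : ℕ, (x : ℝ) * g^[x] 1 < ((y : ℝ) + 1) * g^[y] 1 :=
  ⟨hR.lt_of_satisfiesSimpleProportionality, hR.2.satisfiesSimpleProportionality⟩
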